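/- If a monomial ideal $Q \subseteq S$ is $P$-primary for a monomial prime ideal $P$, then its expansion $Q^*$ is a $P^*$-primary ideal of $S^*$. -/

import Mathlib

open MvPolynomial

/-- The monomial ideal of `S = K[x_1,…,x_n]` generated by the monomials `x^a`, `a ∈ A`. -/
noncomputable def monIdeal (K : Type*) [Field K] {n : ℕ} (A : Set (Fin n → ℕ)) :
    Ideal (MvPolynomial (Fin n) K) :=
  Ideal.span ((fun a => ∏ j, (X j : MvPolynomial (Fin n) K) ^ a j) '' A)

/-- The expansion `I^* = ∑_{a ∈ A} P_1^{a(1)} ⋯ P_n^{a(n)} ⊆ S^*` of the monomial ideal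
generated by the monomials `x^a`, `a ∈ A`, with respect to the tuple `(i_1,…,i_n)`;
here `P_j = (x_{j1},…,x_{j i_j})`. -/
noncomputable def expIdeal (K : Type*) [Field K] {n : ℕ} (iv : Fin n → ℕ)
    (A : Set (Fin n → ℕ)) : Ideal (MvPolynomial ((j : Fin n) × Fin (iv j)) K) :=
  ⨆ a ∈ A, ∏ j, (Ideal.span (Set.range fun k : Fin (iv j) =>
      (X ⟨j, k⟩ : MvPolynomial ((j : Fin n) × Fin (iv j)) K))) ^ a j

/-- The `K`-algebra homomorphism `π : S^* → S`, `x_{jk} ↦ x_j`. -/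
noncomputable def piHom (K : Type*) [Field K] {n : ℕ} (iv : Fin n → ℕ) :
    MvPolynomial ((j : Fin n) × Fin (iv j)) K →ₐ[K] MvPolynomial (Fin n) K :=
  aeval fun p => X p.1

/-! A monomial ideal `I ≠ (1)` of a polynomial ring over a domain is primary to the prime
`(x_p : p ∈ W)` as soon as it contains a power of every `x_p`, `p ∈ W`, and membership of a
monomial in `I` only depends on its exponents at `W`. Indeed, let `xy ∈ I` with
`y ∉ (x_p : p ∈ W)`, and discard the terms of `x` that lie in `I`. If a term survives, then in
`x * y` some surviving term of `x` times a term of `y` of lowest `W`-degree does not cancel. That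
term of `y` is free of the `x_p`, `p ∈ W`, so the resulting monomial of `I` has the same
`W`-exponents as the term of `x`, which therefore lies in `I`: a contradiction.

A `P`-primary monomial ideal `Q` satisfies these conditions for `W = V`. They transfer to `Q^*`
with `W = {(j, k) : j ∈ V}`, because a monomial `x^m` lies in `Q^*` iff `π(x^m)` lies in `Q`, and
the exponent of `x_j` in `π(x^m)` is the degree of `x^m` in the block of variables `x_{jk}`. -/

open Finsupp

theorem Ideal.isPrimary_and_radical_eq {R : Type*} [CommSemiring R] {I J : Ideal R}
    (hI : I ≠ ⊤) (hJ : J ≤ I.radical) (hmul : ∀ x y, x * y ∈ I → y ∉ J → x ∈ I) :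
    I.IsPrimary ∧ I.radical = J := by
  have hrad : I.radical = J := by
    refine le_antisymm (fun x hx => ?_) hJ
    obtain ⟨c, hc⟩ := Ideal.mem_radical_iff.mp hx
    by_contra hxJ
    induction c with
    | zero => exact hI ((Ideal.eq_top_iff_one I).mpr (by simpa using hc))
    | succ c ih => exact ih (hmul _ _ (by rwa [← pow_succ]) hxJ)
  refine ⟨Ideal.isPrimary_iff.mpr ⟨hI, fun {x y} hxy => ?_⟩, hrad⟩
  rw [hrad, or_iff_not_imp_right]
  exact hmul x y hxy

namespace MvPolynomial

variable {σ R : Type*}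

section CommSemiring

variable [CommSemiring R]

def IsMonomialIdeal (I : Ideal (MvPolynomial σ R)) : Prop :=
  ∀ f ∈ I, ∀ m ∈ f.support, monomial m 1 ∈ I

theorem isMonomialIdeal_span_monomial (M : Set (σ →₀ ℕ)) :
    IsMonomialIdeal (Ideal.span ((fun m => monomial m (1 : R)) '' M)) := by
  intro f hf m hm
  obtain ⟨u, hu, hum⟩ := mem_ideal_span_monomial_image.mp hf m hm
  exact mem_ideal_span_monomial_image.mpr fun m' hm' =>
    ⟨u, hu, (Finset.mem_singleton.mp (support_monomial_subset hm')).symm ▸ hum⟩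

theorem exists_eq_mem_add_monomial_notMem (I : Ideal (MvPolynomial σ R))
    (x : MvPolynomial σ R) :
    ∃ g b, x = g + b ∧ g ∈ I ∧ ∀ m ∈ b.support, monomial m 1 ∉ I := by
  classical
  refine ⟨∑ m ∈ x.support with monomial m 1 ∈ I, monomial m (coeff m x),
    ∑ m ∈ x.support with monomial m 1 ∉ I, monomial m (coeff m x), ?_, ?_, ?_⟩
  · rw [Finset.sum_filter_add_sum_filter_not, ← as_sum]
  · refine Ideal.sum_mem _ fun m hm => ?_
    rw [← mul_one (coeff m x), ← C_mul_monomial]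
    exact I.mul_mem_left _ (Finset.mem_filter.mp hm).2
  · intro m hm
    obtain ⟨m', hm', hmm'⟩ := Finset.mem_biUnion.mp (support_sum hm)
    rw [Finset.mem_singleton.mp (support_monomial_subset hmm')]
    exact (Finset.mem_filter.mp hm').2

variable [Nontrivial R] {I : Ideal (MvPolynomial σ R)} {W : Set σ}

theorem monomial_mem_span_monomial_iff {M : Set (σ →₀ ℕ)} {m : σ →₀ ℕ} :
    monomial m (1 : R) ∈ Ideal.span ((fun m => monomial m (1 : R)) '' M) ↔
      ∃ u ∈ M, u ≤ m := by
  classical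
  rw [mem_ideal_span_monomial_image, support_monomial, if_neg one_ne_zero]
  simp

theorem monomial_one_notMem_span_X_image {m : σ →₀ ℕ} (hm : ∀ p ∈ W, m p = 0) :
    monomial m (1 : R) ∉ Ideal.span (X '' W) := by
  classical
  rw [mem_ideal_span_X_image, support_monomial, if_neg one_ne_zero]
  simpa using hm

theorem monomial_mem_of_isPrimary (hI : I.IsPrimary) (hrad : I.radical = Ideal.span (X '' W))
    {m m' : σ →₀ ℕ} (hmm' : ∀ p ∈ W, m p = m' p) (hm : monomial m 1 ∈ I) :
    monomial m' 1 ∈ I := by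
  classical
  have hsplit : monomial m (1 : R) =
      monomial (m.filter (· ∈ W)) 1 * monomial (m.filter (· ∉ W)) 1 := by
    rw [monomial_mul, one_mul, filter_add_filter_not]
  have hout : monomial (m.filter (· ∉ W)) (1 : R) ∉ I.radical :=
    hrad ▸ monomial_one_notMem_span_X_image fun p hp => by simp [hp]
  have hin := ((Ideal.isPrimary_iff.mp hI).2 (hsplit ▸ hm)).resolve_right hout
  refine Ideal.mem_of_dvd _ (monomial_dvd_monomial.mpr ⟨Or.inr fun p => ?_, dvd_rfl⟩) hin
  by_cases hp : p ∈ W <;> simp [hp, hmm']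

end CommSemiring

section Domain

variable [CommRing R] [IsDomain R] {I : Ideal (MvPolynomial σ R)} {W : Set σ}

theorem exists_add_mem_support_mul_with_min_weight (w : σ → ℕ) {f g : MvPolynomial σ R}
    (hf : f ≠ 0) (hg : g ≠ 0) :
    ∃ e ∈ f.support, ∃ d ∈ g.support, e + d ∈ (f * g).support ∧
      ∀ d' ∈ g.support, weight w d ≤ weight w d' := by
  classical
  obtain ⟨p, hp⟩ : ∃ p : ℕ, (p : ℕ∞) = (f : MvPowerSeries σ R).weightedOrder w :=
    ⟨_, (MvPowerSeries.ne_zero_iff_weightedOrder_finite w).mp (by simpa using hf)⟩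
  obtain ⟨q, hq⟩ : ∃ q : ℕ, (q : ℕ∞) = (g : MvPowerSeries σ R).weightedOrder w :=
    ⟨_, (MvPowerSeries.ne_zero_iff_weightedOrder_finite w).mp (by simpa using hg)⟩
  -- the lowest weighted-homogeneous component of `f * g` is the product of those of `f` and `g`
  have hlow := MvPowerSeries.weightedHomogeneousComponent_mul_of_le_weightedOrder hp.le hq.le
  have hne : (f : MvPowerSeries σ R).weightedHomogeneousComponent w p *
      (g : MvPowerSeries σ R).weightedHomogeneousComponent w q ≠ 0 :=
    mul_ne_zero (MvPowerSeries.weightedHomogeneousComponent_of_weightedOrder hp)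
      (MvPowerSeries.weightedHomogeneousComponent_of_weightedOrder hq)
  obtain ⟨t, ht⟩ := (MvPowerSeries.ne_zero_iff_exists_coeff_ne_zero _).mp hne
  have hft : t ∈ (f * g).support := by
    rw [← hlow, MvPowerSeries.coeff_weightedHomogeneousComponent, ← coe_mul, coeff_coe] at ht
    exact mem_support_iff.mpr fun h => ht (by simp [h])
  rw [MvPowerSeries.coeff_mul] at ht
  obtain ⟨⟨e, d⟩, hed, hterm⟩ := Finset.exists_ne_zero_of_sum_ne_zero ht
  rw [Finset.HasAntidiagonal.mem_antidiagonal] at hed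
  simp only [MvPowerSeries.coeff_weightedHomogeneousComponent, coeff_coe, ite_mul, zero_mul,
    mul_ite, mul_zero, ne_eq, ite_eq_right_iff, Classical.not_imp] at hterm
  obtain ⟨hwd, -, hcoeff⟩ := hterm
  refine ⟨e, mem_support_iff.mpr (left_ne_zero_of_mul hcoeff), d,
    mem_support_iff.mpr (right_ne_zero_of_mul hcoeff), hed ▸ hft, fun d' hd' => ?_⟩
  have hle := MvPowerSeries.weightedOrder_le w (f := (g : MvPowerSeries σ R))
    (d := d') (by simpa [coeff_coe] using hd')
  rw [← hq] at hle
  exact hwd ▸ (by exact_mod_cast hle)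

variable (hI : IsMonomialIdeal I)
  (hW : ∀ m m', (∀ p ∈ W, m p = m' p) → monomial m 1 ∈ I → monomial m' 1 ∈ I)
include hI hW

theorem mem_of_mul_mem_of_notMem_span_X_image {x y : MvPolynomial σ R} (hxy : x * y ∈ I)
    (hy : y ∉ Ideal.span (X '' W)) : x ∈ I := by
  classical
  obtain ⟨g, b, rfl, hg, hb⟩ := exists_eq_mem_add_monomial_notMem I x
  obtain rfl | hb0 := eq_or_ne b 0
  · rwa [add_zero]
  have hy0 : y ≠ 0 := by rintro rfl; exact hy (zero_mem _)
  have hby : b * y ∈ I := by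
    simpa [add_mul] using I.sub_mem hxy (I.mul_mem_right y hg)
  obtain ⟨d₀, hd₀, hd₀W⟩ : ∃ d₀ ∈ y.support, ∀ p ∈ W, d₀ p = 0 := by
    simpa [mem_ideal_span_X_image] using hy
  set w : σ → ℕ := fun p => if p ∈ W then 1 else 0
  obtain ⟨e, he, d, hd, hed, hmin⟩ := exists_add_mem_support_mul_with_min_weight w hb0 hy0
  have hdW : ∀ p ∈ W, d p = 0 := by
    have hd₀w : weight w d₀ = 0 :=
      Finset.sum_eq_zero fun p _ => by by_cases hp : p ∈ W <;> simp [w, hp, hd₀W]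
    intro p hp
    by_contra hdp
    have := (le_weight_of_ne_zero' w hdp).trans ((hmin d₀ hd₀).trans hd₀w.le)
    simp [w, hp] at this
  exact (hb e he (hW (e + d) e (fun p hp => by simp [hdW p hp]) (hI _ hby _ hed))).elim

theorem isPrimary_and_radical_eq_span_X_image (hne : I ≠ ⊤)
    (hpow : ∀ p ∈ W, ∃ c : ℕ, X p ^ c ∈ I) :
    I.IsPrimary ∧ I.radical = Ideal.span (X '' W) :=
  Ideal.isPrimary_and_radical_eq hne
    (Ideal.span_le.mpr fun _ ⟨p, hp, hX⟩ => hX ▸ Ideal.mem_radical_iff.mpr (hpow p hp))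
    fun _ _ hxy hy => mem_of_mul_mem_of_notMem_span_X_image hI hW hxy hy

end Domain

end MvPolynomial

section Expansion

variable {K : Type*} [Field K] {n : ℕ} {iv : Fin n → ℕ}

def blockDegree (m : ((j : Fin n) × Fin (iv j)) →₀ ℕ) (j : Fin n) : ℕ :=
  ∑ k, m ⟨j, k⟩

theorem blockDegree_add (m m' : ((j : Fin n) × Fin (iv j)) →₀ ℕ) :
    blockDegree (m + m') = blockDegree m + blockDegree m' := by
  ext j
  simp [blockDegree, Finset.sum_add_distrib]

theorem blockDegree_mono {m m' : ((j : Fin n) × Fin (iv j)) →₀ ℕ} (h : m ≤ m') :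
    blockDegree m ≤ blockDegree m' :=
  fun j => Finset.sum_le_sum fun k _ => h ⟨j, k⟩

theorem blockDegree_single (j : Fin n) (k : Fin (iv j)) (c : ℕ) :
    blockDegree (single (⟨j, k⟩ : (j : Fin n) × Fin (iv j)) c) = Pi.single j c := by
  ext j'
  rcases eq_or_ne j' j with rfl | hj'
  · simp [blockDegree, single_apply]
  · simp [blockDegree, hj'.symm]

theorem piHom_monomial (m : ((j : Fin n) × Fin (iv j)) →₀ ℕ) :
    piHom K iv (monomial m 1) = monomial (equivFunOnFinite.symm (blockDegree m)) 1 := by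
  rw [piHom, aeval_monomial, map_one, one_mul, monomial_eq, C_1, one_mul, Finsupp.prod_pow,
    Finsupp.prod_pow, Fintype.prod_sigma]
  exact Finset.prod_congr rfl fun j _ => Finset.prod_pow_eq_pow_sum _ _ (X j)

theorem monIdeal_eq_span_monomial (A : Set (Fin n → ℕ)) :
    monIdeal K A = Ideal.span ((fun m => monomial m (1 : K)) '' (equivFunOnFinite.symm '' A)) := by
  rw [monIdeal, Set.image_image]
  congr! with a
  rw [monomial_eq, C_1, one_mul, Finsupp.prod_pow]
  rfl

theorem monomial_mem_monIdeal_iff {A : Set (Fin n → ℕ)} {b : Fin n →₀ ℕ} :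
    monomial b 1 ∈ monIdeal K A ↔ ∃ a ∈ A, a ≤ ⇑b := by
  rw [monIdeal_eq_span_monomial, monomial_mem_span_monomial_iff, Set.exists_mem_image]
  rfl

theorem monIdeal_image_single (V : Set (Fin n)) :
    monIdeal K ((fun j => Pi.single j 1) '' V) = Ideal.span (X '' V) := by
  classical
  simp_rw [monIdeal, Set.image_image, Pi.single_apply, pow_ite, pow_one, pow_zero,
    Finset.prod_ite_eq', Finset.mem_univ, if_true]

variable (K iv) in
/-- The ideal `P_j` of `S^*`. -/
noncomputable def blockIdeal (j : Fin n) : Ideal (MvPolynomial ((j : Fin n) × Fin (iv j)) K) :=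
  Ideal.span (Set.range fun k : Fin (iv j) => X ⟨j, k⟩)

theorem expIdeal_eq_iSup_blockIdeal (A : Set (Fin n → ℕ)) :
    expIdeal K iv A = ⨆ a ∈ A, ∏ j, blockIdeal K iv j ^ a j :=
  rfl

variable (K iv) in
noncomputable def blockDegreeIdeal (a : Fin n → ℕ) :
    Ideal (MvPolynomial ((j : Fin n) × Fin (iv j)) K) :=
  Ideal.span ((fun m => monomial m 1) '' {m | a ≤ blockDegree m})

theorem blockDegreeIdeal_zero : blockDegreeIdeal K iv 0 = ⊤ :=
  (Ideal.eq_top_iff_one _).mpr (Ideal.subset_span ⟨0, fun _ => Nat.zero_le _, by simp⟩)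

theorem blockDegreeIdeal_mul_le (a b : Fin n → ℕ) :
    blockDegreeIdeal K iv a * blockDegreeIdeal K iv b ≤ blockDegreeIdeal K iv (a + b) := by
  rw [blockDegreeIdeal, blockDegreeIdeal, Ideal.span_mul_span', Ideal.span_le]
  rintro _ ⟨_, ⟨m, hm, rfl⟩, _, ⟨m', hm', rfl⟩, rfl⟩
  refine Ideal.subset_span ⟨m + m', ?_, by simp [monomial_mul]⟩
  rw [Set.mem_ofPred_eq, blockDegree_add]
  exact add_le_add hm hm'

theorem blockIdeal_pow_le (j : Fin n) (c : ℕ) :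
    blockIdeal K iv j ^ c ≤ blockDegreeIdeal K iv (Pi.single j c) := by
  induction c with
  | zero => simp [blockDegreeIdeal_zero]
  | succ c ih =>
    have hP : blockIdeal K iv j ≤ blockDegreeIdeal K iv (Pi.single j 1) := by
      refine Ideal.span_le.mpr ?_
      rintro _ ⟨k, rfl⟩
      exact Ideal.subset_span ⟨single ⟨j, k⟩ 1, (blockDegree_single j k 1).ge,
        (X_pow_eq_monomial.symm.trans (pow_one _))⟩
    rw [pow_succ, Pi.single_add]
    exact (Ideal.mul_mono ih hP).trans (blockDegreeIdeal_mul_le _ _)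

theorem prod_blockIdeal_pow_le (s : Finset (Fin n)) (a : Fin n → ℕ) :
    ∏ j ∈ s, blockIdeal K iv j ^ a j ≤
      blockDegreeIdeal K iv (∑ j ∈ s, Pi.single j (a j)) := by
  classical
  induction s using Finset.induction_on with
  | empty => simp [blockDegreeIdeal_zero]
  | insert j s hj ih =>
    rw [Finset.prod_insert hj, Finset.sum_insert hj]
    exact (Ideal.mul_mono (blockIdeal_pow_le j (a j)) ih).trans (blockDegreeIdeal_mul_le _ _)

theorem prod_blockIdeal_pow_eq (a : Fin n → ℕ) :
    ∏ j, blockIdeal K iv j ^ a j = blockDegreeIdeal K iv a := by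
  apply le_antisymm
  · simpa only [Finset.univ_sum_single] using prod_blockIdeal_pow_le Finset.univ a
  · refine Ideal.span_le.mpr ?_
    rintro _ ⟨m, hm, rfl⟩
    simp only [SetLike.mem_coe]
    rw [monomial_eq, C_1, one_mul, Finsupp.prod_pow, Fintype.prod_sigma]
    refine Ideal.prod_mem_prod fun j _ => Ideal.pow_le_pow_right (hm j) ?_
    rw [blockDegree, ← Finset.prod_pow_eq_pow_sum]
    exact Ideal.prod_mem_prod fun k _ =>
      Ideal.pow_mem_pow (Ideal.subset_span (Set.mem_range_self k)) _

theorem expIdeal_eq_span_monomial (A : Set (Fin n → ℕ)) :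
    expIdeal K iv A =
      Ideal.span ((fun m => monomial m 1) '' {m | ∃ a ∈ A, a ≤ blockDegree m}) := by
  simp_rw [expIdeal_eq_iSup_blockIdeal, prod_blockIdeal_pow_eq, blockDegreeIdeal,
    ← Ideal.span_iUnion, ← Set.image_iUnion]
  congr 2
  ext m
  simp

theorem isMonomialIdeal_expIdeal (A : Set (Fin n → ℕ)) : IsMonomialIdeal (expIdeal K iv A) :=
  expIdeal_eq_span_monomial (K := K) (iv := iv) A ▸ isMonomialIdeal_span_monomial _

theorem monomial_mem_expIdeal_iff {A : Set (Fin n → ℕ)}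
    {m : ((j : Fin n) × Fin (iv j)) →₀ ℕ} :
    monomial m 1 ∈ expIdeal K iv A ↔ piHom K iv (monomial m 1) ∈ monIdeal K A := by
  rw [expIdeal_eq_span_monomial, monomial_mem_span_monomial_iff, piHom_monomial,
    monomial_mem_monIdeal_iff, coe_equivFunOnFinite_symm]
  constructor
  · rintro ⟨u, ⟨a, ha, hau⟩, hum⟩
    exact ⟨a, ha, hau.trans (blockDegree_mono hum)⟩
  · rintro ⟨a, ha, ham⟩
    exact ⟨m, ⟨a, ha, ham⟩, le_rfl⟩

theorem expIdeal_ne_top {A : Set (Fin n → ℕ)} (hA : monIdeal K A ≠ ⊤) :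
    expIdeal K iv A ≠ ⊤ := by
  intro htop
  refine hA ((Ideal.eq_top_iff_one _).mpr ?_)
  simpa using (monomial_mem_expIdeal_iff (m := 0)).mp (htop ▸ Submodule.mem_top)

theorem X_pow_mem_expIdeal_iff {A : Set (Fin n → ℕ)} {p : (j : Fin n) × Fin (iv j)} {c : ℕ} :
    X p ^ c ∈ expIdeal K iv A ↔ X p.1 ^ c ∈ monIdeal K A := by
  rw [X_pow_eq_monomial, monomial_mem_expIdeal_iff, ← X_pow_eq_monomial, map_pow]
  simp [piHom]

theorem expIdeal_image_single (V : Set (Fin n)) :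
    expIdeal K iv ((fun j => Pi.single j 1) '' V) = Ideal.span (X '' {p | p.1 ∈ V}) := by
  classical
  simp_rw [expIdeal, iSup_image, Pi.single_apply, pow_ite, pow_one, pow_zero,
    Finset.prod_ite_eq', Finset.mem_univ, if_true, ← Ideal.span_iUnion]
  congr 1
  ext f
  simp

end Expansion

theorem expIdeal_isPrimary_general (K : Type*) [Field K] {n : ℕ} (iv : Fin n → ℕ)
    (Q : Set (Fin n → ℕ)) (V : Set (Fin n))
    (hprimary : (monIdeal K Q).IsPrimary)
    (hrad : (monIdeal K Q).radical = monIdeal K ((fun j => Pi.single j 1) '' V)) :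
    (expIdeal K iv Q).IsPrimary ∧
      (expIdeal K iv Q).radical = expIdeal K iv ((fun j => Pi.single j 1) '' V) := by
  rw [monIdeal_image_single] at hrad
  rw [expIdeal_image_single]
  refine isPrimary_and_radical_eq_span_X_image (isMonomialIdeal_expIdeal Q)
    (fun m m' hmm' hm => ?_) (expIdeal_ne_top (Ideal.isPrimary_iff.mp hprimary).1)
    (fun p hp => ?_)
  · rw [monomial_mem_expIdeal_iff, piHom_monomial] at hm ⊢
    exact monomial_mem_of_isPrimary hprimary hrad
      (fun j hj => show blockDegree m j = blockDegree m' j from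
        Finset.sum_congr rfl fun k _ => hmm' ⟨j, k⟩ hj) hm
  · have hX : X p.1 ∈ (monIdeal K Q).radical := hrad ▸ Ideal.subset_span ⟨p.1, hp, rfl⟩
    simpa only [X_pow_mem_expIdeal_iff] using Ideal.mem_radical_iff.mp hX

/-- Lemma 1.1(vii): if the monomial ideal `Q` is `P`-primary for the monomial prime
`P = (x_j : j ∈ V)`, then `Q^*` is `P^*`-primary, where
`P^* = (x_{jk} : j ∈ V, 1 ≤ k ≤ i_j)` is the expansion of `P`. -/
theorem expIdeal_isPrimary (K : Type*) [Field K] {n : ℕ} (iv : Fin n → ℕ)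
    (hiv : ∀ j, 0 < iv j) (Q : Set (Fin n → ℕ)) (V : Set (Fin n))
    (hprimary : (monIdeal K Q).IsPrimary)
    (hrad : (monIdeal K Q).radical = monIdeal K ((fun j => Pi.single j 1) '' V)) :
    (expIdeal K iv Q).IsPrimary ∧
      (expIdeal K iv Q).radical = expIdeal K iv ((fun j => Pi.single j 1) '' V) :=
  expIdeal_isPrimary_general K iv Q V hprimary hrad
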